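/- arXiv:0801.0798 — 2 statements merged into one kernel-verified Lean document; each statement's English description precedes it below -/
import Mathlib

section
/- There is a constant C > 0 such that for every positive integer n the 2-coloring χ of [1,n] defined by coloring x red if x ≤ ⌊4n/11⌋ or x > ⌊10n/11⌋, and blue if ⌊4n/11⌋ < x ≤ ⌊10n/11⌋, satisfies |S(χ,n) − n²/22| ≤ C·n, where S(χ,n) is the number of monochromatic Schur triples. In particular, the minimum over all 2-colorings of [1,n] of the number of monochromatic Schur triples is at most n²/22 + C·n. -/
/-- The number of monochromatic Schur triples of a coloring `χ` of `[1, n]`: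
pairs `(x, y)` with `1 ≤ x ≤ y`, `x + y ≤ n`, and `χ x = χ y = χ (x + y)`. -/
def schurTriples {α : Type*} [DecidableEq α] (n : ℕ) (χ : ℕ → α) : ℕ :=
  ((Finset.Icc 1 n ×ˢ Finset.Icc 1 n).filter
    (fun p => p.1 ≤ p.2 ∧ p.1 + p.2 ≤ n ∧
      χ p.1 = χ p.2 ∧ χ p.2 = χ (p.1 + p.2))).card

/-!
Colour `[1, a]` and `(b, n]` red and `(a, b]` blue, with `2a ≤ b ≤ n ≤ a + b + 1`. Then every
monochromatic triple `(x, y)` is of one of three kinds: red inside `[1, a]` (there are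
`⌊a²/4⌋`), blue inside `(a, b]` (after translating by `a`, there are `⌊(b - 2a)²/4⌋`), or red
with `x ≤ a < b < y` (there are `C(n - b, 2)`). For `a = ⌊4n/11⌋`, `b = ⌊10n/11⌋` this is
`(16/4 + 4/4 + 1/2) n²/121 + O(n) = n²/22 + O(n)`.
-/

open Finset

lemma sum_Ioc_zero_succ {M : Type*} [AddCommMonoid M] (f : ℕ → M) (k : ℕ) :
    ∑ x ∈ Ioc 0 (k + 1), f x = f 1 + ∑ x ∈ Ioc 0 k, f (x + 1) := by
  rw [← Icc_add_one_left_eq_Ioc, ← insert_Icc_add_one_left_eq_Icc (by omega),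
    sum_insert (by simp), ← map_add_right_Icc, sum_map, Icc_add_one_left_eq_Ioc]
  rfl

lemma sum_Ioc_sub_two_mul :
    ∀ m k : ℕ, m ≤ 2 * k + 1 → ∑ x ∈ Ioc 0 k, (m + 1 - 2 * x) = m ^ 2 / 4
  | 0, _, _ => sum_eq_zero fun x hx => by simp at hx; omega
  | 1, _, _ => sum_eq_zero fun x hx => by simp at hx; omega
  | m + 2, 0, h => by omega
  | m + 2, k + 1, h => by
    have hshift : ∀ x, m + 2 + 1 - 2 * (x + 1) = m + 1 - 2 * x := fun x => by omega
    rw [sum_Ioc_zero_succ]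
    simp only [hshift]
    rw [sum_Ioc_sub_two_mul m k (by omega)]
    have : (m + 2) ^ 2 = m ^ 2 + 4 * (m + 1) := by ring
    omega

lemma sum_Ioc_sub_two_mul_of_two_mul_le {a b : ℕ} (h : 2 * a ≤ b) :
    ∑ x ∈ Ioc a b, (b + 1 - 2 * x) = (b - 2 * a) ^ 2 / 4 := by
  have hI : Ioc a b = (Ioc 0 (b - a)).map (addLeftEmbedding a) := by
    rw [map_add_left_Ioc, add_zero, Nat.add_sub_cancel' (by omega)]
  have hshift : ∀ x, b + 1 - 2 * (a + x) = b - 2 * a + 1 - 2 * x := fun x => by omega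
  rw [hI, sum_map]
  simp only [addLeftEmbedding_apply, hshift]
  exact sum_Ioc_sub_two_mul _ _ (by omega)

lemma sum_Ioc_sub :
    ∀ m k : ℕ, m ≤ k + 1 → ∑ x ∈ Ioc 0 k, (m - x) = m.choose 2
  | 0, _, _ => sum_eq_zero fun x _ => by omega
  | m + 1, 0, h => by
    obtain rfl : m = 0 := by omega
    rfl
  | m + 1, k + 1, h => by
    rw [sum_Ioc_zero_succ]
    simp only [Nat.add_sub_add_right]
    rw [sum_Ioc_sub m k (by omega), Nat.choose_succ_succ' m 1, Nat.choose_one_right,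
      Nat.add_sub_cancel]

def schurPartners {α : Type*} [DecidableEq α] (n : ℕ) (χ : ℕ → α) (x : ℕ) : Finset ℕ :=
  {y ∈ Icc 1 n | x ≤ y ∧ x + y ≤ n ∧ χ x = χ y ∧ χ y = χ (x + y)}

lemma schurTriples_eq_sum_card_schurPartners {α : Type*} [DecidableEq α] (n : ℕ) (χ : ℕ → α) :
    schurTriples n χ = ∑ x ∈ Ioc 0 n, #(schurPartners n χ x) := by
  simp only [schurTriples, schurPartners, card_filter, sum_product, ← Icc_add_one_left_eq_Ioc,
    zero_add]

def redBlueRed (a b x : ℕ) : Bool := decide (x ≤ a ∨ b < x)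

section RedBlueRed

variable {a b n : ℕ}

lemma card_schurPartners_redBlueRed_of_le (hab : 2 * a ≤ b) (hbn : b ≤ n) {x : ℕ}
    (hx : x ∈ Ioc 0 a) :
    #(schurPartners n (redBlueRed a b) x) = (a + 1 - 2 * x) + (n - b - x) := by
  rw [mem_Ioc] at hx
  have hpartners : schurPartners n (redBlueRed a b) x = Icc x (a - x) ∪ Ioc b (n - x) := by
    ext y
    simp only [schurPartners, mem_filter, mem_Icc, mem_Ioc, mem_union, redBlueRed,
      decide_eq_decide]
    omega
  rw [hpartners, card_union_of_disjoint, Nat.card_Icc, Nat.card_Ioc]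
  · omega
  · exact disjoint_left.2 fun y hy hy' => by simp only [mem_Icc, mem_Ioc] at hy hy'; omega

lemma card_schurPartners_redBlueRed_of_mem_Ioc (hbn : b ≤ n) {x : ℕ} (hx : x ∈ Ioc a b) :
    #(schurPartners n (redBlueRed a b) x) = b + 1 - 2 * x := by
  rw [mem_Ioc] at hx
  have hpartners : schurPartners n (redBlueRed a b) x = Icc x (b - x) := by
    ext y
    simp only [schurPartners, mem_filter, mem_Icc, redBlueRed, decide_eq_decide]
    omega
  rw [hpartners, Nat.card_Icc]
  omega

lemma schurPartners_redBlueRed_of_lt (hn : n < 2 * b + 2) {x : ℕ} (hx : b < x) :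
    schurPartners n (redBlueRed a b) x = ∅ :=
  filter_false_of_mem fun y hy => by
    simp only [mem_Icc, redBlueRed, decide_eq_decide] at hy ⊢
    omega

theorem schurTriples_redBlueRed (hab : 2 * a ≤ b) (hbn : b ≤ n) (hn : n ≤ a + b + 1) :
    schurTriples n (redBlueRed a b) = a ^ 2 / 4 + (b - 2 * a) ^ 2 / 4 + (n - b).choose 2 := by
  have hred : ∑ x ∈ Ioc 0 a, #(schurPartners n (redBlueRed a b) x)
      = a ^ 2 / 4 + (n - b).choose 2 := by
    rw [sum_congr rfl fun x hx => card_schurPartners_redBlueRed_of_le hab hbn hx,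
      sum_add_distrib, sum_Ioc_sub_two_mul a a (by omega), sum_Ioc_sub _ a (by omega)]
  have hblue : ∑ x ∈ Ioc a b, #(schurPartners n (redBlueRed a b) x) = (b - 2 * a) ^ 2 / 4 := by
    rw [sum_congr rfl fun x hx => card_schurPartners_redBlueRed_of_mem_Ioc hbn hx,
      sum_Ioc_sub_two_mul_of_two_mul_le hab]
  have hhigh : ∑ x ∈ Ioc b n, #(schurPartners n (redBlueRed a b) x) = 0 :=
    sum_eq_zero fun x hx => by
      rw [schurPartners_redBlueRed_of_lt (by omega) (mem_Ioc.1 hx).1, card_empty]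
  rw [schurTriples_eq_sum_card_schurPartners, ← sum_Ioc_consecutive _ (Nat.zero_le b) hbn,
    ← sum_Ioc_consecutive _ (Nat.zero_le a) (by omega : a ≤ b), hred, hblue, hhigh]
  ring

end RedBlueRed

lemma four_mul_sq_div_four_mem_Icc (m : ℕ) :
    4 * ((m ^ 2 / 4 : ℕ) : ℝ) ∈ Set.Icc ((m : ℝ) ^ 2 - 3) ((m : ℝ) ^ 2) := by
  have h := Nat.div_add_mod (m ^ 2) 4
  have h4 := Nat.mod_lt (m ^ 2) four_pos
  have hlow : ((m ^ 2 : ℕ) : ℝ) ≤ 4 * ((m ^ 2 / 4 : ℕ) : ℝ) + 3 := by exact_mod_cast (by omega)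
  have hup : 4 * ((m ^ 2 / 4 : ℕ) : ℝ) ≤ ((m ^ 2 : ℕ) : ℝ) := by exact_mod_cast (by omega)
  push_cast at hlow hup
  exact ⟨by linarith, hup⟩

theorem abs_schurTriples_redBlueRed_sub_le {n : ℕ} (hn : 0 < n) :
    |(schurTriples n (redBlueRed (4 * n / 11) (10 * n / 11)) : ℝ) - (n : ℝ) ^ 2 / 22|
      ≤ 2 * (n : ℝ) := by
  set a := 4 * n / 11
  set b := 10 * n / 11
  have hab : 2 * a ≤ b := by omega
  have hcount := schurTriples_redBlueRed hab (by omega : b ≤ n) (by omega : n ≤ a + b + 1)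
  obtain ⟨hA, hA'⟩ := four_mul_sq_div_four_mem_Icc a
  obtain ⟨hB, hB'⟩ := four_mul_sq_div_four_mem_Icc (b - 2 * a)
  push_cast [Nat.cast_sub hab] at hB hB'
  have ha : 11 * (a : ℝ) ≤ 4 * n ∧ 4 * (n : ℝ) ≤ 11 * a + 10 := by
    exact_mod_cast (by omega : 11 * a ≤ 4 * n ∧ 4 * n ≤ 11 * a + 10)
  have hb : 11 * (b : ℝ) ≤ 10 * n ∧ 10 * (n : ℝ) ≤ 11 * b + 10 := by
    exact_mod_cast (by omega : 11 * b ≤ 10 * n ∧ 10 * n ≤ 11 * b + 10)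
  set u := 4 * (n : ℝ) - 11 * a
  set v := 10 * (n : ℝ) - 11 * b
  -- `4/11` and `10/11` are the critical point of the quadratic form in the breakpoints, so the
  -- rounding errors `u`, `v` enter only quadratically.
  have key : 484 * (schurTriples n (redBlueRed a b) : ℝ) - 22 * (n : ℝ) ^ 2
      = 121 * (4 * ((a ^ 2 / 4 : ℕ) : ℝ) - (a : ℝ) ^ 2)
        + 121 * (4 * (((b - 2 * a) ^ 2 / 4 : ℕ) : ℝ) - ((b : ℝ) - 2 * a) ^ 2)
        + u ^ 2 + (2 * u - v) ^ 2 + 2 * v ^ 2 - 22 * (n + v) := by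
    rw [hcount]
    push_cast [Nat.cast_choose_two, Nat.cast_sub hab, Nat.cast_sub (by omega : b ≤ n)]
    ring
  have hu0 : 0 ≤ u := by linarith
  have hu10 : u ≤ 10 := by linarith
  have hv0 : 0 ≤ v := by linarith
  have hv10 : v ≤ 10 := by linarith
  have hsq : u ^ 2 + (2 * u - v) ^ 2 + 2 * v ^ 2 ≤ 800 := by
    nlinarith [mul_nonneg hu0 (sub_nonneg.2 hu10), mul_nonneg hv0 (sub_nonneg.2 hv10),
      mul_nonneg hu0 hv0]
  have hn1 : (1 : ℝ) ≤ n := by exact_mod_cast hn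
  rw [abs_le]
  constructor <;> linarith [sq_nonneg u, sq_nonneg v, sq_nonneg (2 * u - v)]

/-- The red-blue-red coloring of `[1,n]` with breakpoints `⌊4n/11⌋` and
`⌊10n/11⌋` has `n²/22 + O(n)` monochromatic Schur triples; in particular the
minimum over all 2-colorings of the number of monochromatic Schur triples is at
most `n²/22 + C·n`. -/
theorem schur_two_colorings :
    ∃ C : ℝ, 0 < C ∧ ∀ n : ℕ, 0 < n →
      |(schurTriples n
          (fun x => decide (x ≤ 4 * n / 11 ∨ 10 * n / 11 < x)) : ℝ)
        - (n : ℝ) ^ 2 / 22| ≤ C * n ∧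
      ((sInf {m : ℕ | ∃ χ : ℕ → Bool, schurTriples n χ = m} : ℕ) : ℝ) ≤
        (n : ℝ) ^ 2 / 22 + C * n := by
  refine ⟨2, two_pos, fun n hn => ⟨abs_schurTriples_redBlueRed_sub_le hn, ?_⟩⟩
  have hmin : sInf {m : ℕ | ∃ χ : ℕ → Bool, schurTriples n χ = m}
      ≤ schurTriples n (redBlueRed (4 * n / 11) (10 * n / 11)) :=
    Nat.sInf_le ⟨_, rfl⟩
  have hupper := (abs_le.1 (abs_schurTriples_redBlueRed_sub_le hn)).2
  calc ((sInf {m : ℕ | ∃ χ : ℕ → Bool, schurTriples n χ = m} : ℕ) : ℝ)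
      ≤ schurTriples n (redBlueRed (4 * n / 11) (10 * n / 11)) := by exact_mod_cast hmin
    _ ≤ (n : ℝ) ^ 2 / 22 + 2 * n := by linarith
end

section
/- There is a constant C > 0 such that for every positive integer n there exists a 3-coloring χ of [1,n] with S(χ,n) ≤ 47n²/6238 + C·n; such a coloring is obtained by partitioning [1,n] into seven consecutive intervals with endpoints ⌊440n/3119⌋, ⌊1100n/3119⌋, ⌊1210n/3119⌋, ⌊2530n/3119⌋, ⌊2585n/3119⌋, ⌊3072n/3119⌋, n (i.e., interval lengths proportional to 1, 3/2, 1/4, 3, 1/8, 487/440, 47/440) and assigning them the colors 1, 2, 1, 3, 1, 2, 1 in order. -/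
open Finset

section Counting

variable {α : Type*} [DecidableEq α]

def orderedSchurPairs (n : ℕ) (χ : ℕ → α) : Finset (ℕ × ℕ) :=
  (Icc 1 n ×ˢ Icc 1 n).filter
    (fun p => p.1 + p.2 ≤ n ∧ χ p.1 = χ p.2 ∧ χ p.2 = χ (p.1 + p.2))

lemma swap_mem_orderedSchurPairs {n : ℕ} {χ : ℕ → α} {p : ℕ × ℕ}
    (hp : p ∈ orderedSchurPairs n χ) : p.swap ∈ orderedSchurPairs n χ := by
  simp only [orderedSchurPairs, mem_filter, mem_product, Prod.fst_swap, Prod.snd_swap] at hp ⊢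
  obtain ⟨⟨hx, hy⟩, hsum, h₁, h₂⟩ := hp
  exact ⟨⟨hy, hx⟩, by omega, h₁.symm, by rw [add_comm]; exact h₁.trans h₂⟩

lemma two_mul_schurTriples_le (n : ℕ) (χ : ℕ → α) :
    2 * schurTriples n χ ≤ #(orderedSchurPairs n χ) + n := by
  set P := orderedSchurPairs n χ
  have h_le : schurTriples n χ = #(P.filter fun p => p.1 ≤ p.2) := by
    unfold schurTriples
    congr 1
    ext p
    simp only [P, orderedSchurPairs, mem_filter]
    tauto
  have h_swap : #(P.filter fun p => p.1 ≤ p.2) = #(P.filter fun p => p.2 ≤ p.1) := by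
    refine card_nbij' Prod.swap Prod.swap ?_ ?_ (fun _ _ => rfl) (fun _ _ => rfl) <;>
      intro p hp <;>
      simp only [coe_filter, Set.mem_ofPred_eq] at hp ⊢ <;>
      exact ⟨swap_mem_orderedSchurPairs hp.1, hp.2⟩
  have h_union : (P.filter fun p => p.1 ≤ p.2) ∪ (P.filter fun p => p.2 ≤ p.1) = P := by
    rw [← filter_or]
    exact filter_true_of_mem fun p _ => le_total p.1 p.2
  have h_inter : (P.filter fun p => p.1 ≤ p.2) ∩ (P.filter fun p => p.2 ≤ p.1) ⊆
      (Icc 1 n).diag := by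
    intro p hp
    simp only [P, orderedSchurPairs, mem_inter, mem_filter, mem_product, mem_diag] at hp ⊢
    exact ⟨hp.1.1.1.1, le_antisymm hp.1.2 hp.2.2⟩
  have h_diag := card_le_card h_inter
  rw [diag_card, Nat.card_Icc, Nat.add_sub_cancel] at h_diag
  have := card_union_add_card_inter (P.filter fun p => p.1 ≤ p.2) (P.filter fun p => p.2 ≤ p.1)
  rw [h_union] at this
  omega

end Counting

def triangle (A B L : ℕ) : Finset (ℕ × ℕ) :=
  (Ioc A L ×ˢ Ioc B L).filter (fun p => p.1 + p.2 ≤ L)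

@[simp] lemma mem_triangle {A B L : ℕ} {p : ℕ × ℕ} :
    p ∈ triangle A B L ↔ A < p.1 ∧ B < p.2 ∧ p.1 + p.2 ≤ L := by
  simp only [triangle, mem_filter, mem_product, mem_Ioc]; omega

lemma two_mul_card_triangle_le (A B L : ℕ) : 2 * #(triangle A B L) ≤ (L - A - B) ^ 2 := by
  induction L with
  | zero => simp [triangle]
  | succ L ih =>
    have h_sub : triangle A B (L + 1) ⊆
        triangle A B L ∪ (Ioc A (L - B)).image (fun x => (x, L + 1 - x)) := by
      intro p hp
      rw [mem_triangle] at hp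
      rw [mem_union, mem_triangle, mem_image]
      by_cases h : p.1 + p.2 ≤ L
      · exact Or.inl ⟨hp.1, hp.2.1, h⟩
      · exact Or.inr ⟨p.1, mem_Ioc.2 (by omega), Prod.ext rfl (by omega)⟩
    have h_card : #(triangle A B (L + 1)) ≤ #(triangle A B L) + (L - A - B) := by
      refine (card_le_card h_sub).trans <| (card_union_le _ _).trans ?_
      grw [card_image_le, Nat.card_Ioc]
      omega
    rcases (by omega : L + 1 - A - B = L - A - B + 1 ∨ L - A - B = 0) with h | h
    · rw [h]; nlinarith
    · rw [h, zero_pow two_ne_zero] at ih; omega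

lemma sq_mul_two_mul_card_triangle_le {A B L d c : ℕ} (h : d * (L - A - B) ≤ c) :
    d ^ 2 * (2 * #(triangle A B L)) ≤ c ^ 2 :=
  calc d ^ 2 * (2 * #(triangle A B L)) ≤ d ^ 2 * (L - A - B) ^ 2 :=
        Nat.mul_le_mul_left _ (two_mul_card_triangle_le A B L)
    _ = (d * (L - A - B)) ^ 2 := (mul_pow _ _ _).symm
    _ ≤ c ^ 2 := Nat.pow_le_pow_left h 2

def schurColoring (n x : ℕ) : Fin 3 :=
  if x ≤ 440 * n / 3119 then 0
  else if x ≤ 1100 * n / 3119 then 1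
  else if x ≤ 1210 * n / 3119 then 0
  else if x ≤ 2530 * n / 3119 then 2
  else if x ≤ 2585 * n / 3119 then 0
  else if x ≤ 3072 * n / 3119 then 1
  else 0

section SchurColoring

variable {n x y : ℕ}

lemma schurColoring_eq_zero_iff : schurColoring n x = 0 ↔
    x ≤ 440 * n / 3119 ∨ 1100 * n / 3119 < x ∧ x ≤ 1210 * n / 3119 ∨
      2530 * n / 3119 < x ∧ x ≤ 2585 * n / 3119 ∨ 3072 * n / 3119 < x := by
  unfold schurColoring
  split_ifs <;> omega

lemma schurColoring_eq_one_iff : schurColoring n x = 1 ↔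
    440 * n / 3119 < x ∧ x ≤ 1100 * n / 3119 ∨ 2585 * n / 3119 < x ∧ x ≤ 3072 * n / 3119 := by
  unfold schurColoring
  split_ifs <;> omega

lemma schurColoring_eq_two_iff : schurColoring n x = 2 ↔
    1210 * n / 3119 < x ∧ x ≤ 2530 * n / 3119 := by
  unfold schurColoring
  split_ifs <;> omega

def schurTriangle (n : ℕ) : Fin 11 → Finset (ℕ × ℕ) := ![
  triangle 0 0 (440 * n / 3119),
  triangle 0 (1100 * n / 3119) (1210 * n / 3119),
  triangle (1100 * n / 3119) 0 (1210 * n / 3119),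
  triangle 0 (2530 * n / 3119) (2585 * n / 3119),
  triangle (2530 * n / 3119) 0 (2585 * n / 3119),
  triangle 0 (3072 * n / 3119) n,
  triangle (3072 * n / 3119) 0 n,
  triangle (440 * n / 3119) (440 * n / 3119) (1100 * n / 3119),
  triangle (440 * n / 3119) (2585 * n / 3119) (3072 * n / 3119),
  triangle (2585 * n / 3119) (440 * n / 3119) (3072 * n / 3119),
  triangle (1210 * n / 3119) (1210 * n / 3119) (2530 * n / 3119)]

def schurTriangleWidth : Fin 11 → ℕ := ![440, 110, 110, 55, 55, 47, 47, 220, 47, 47, 110]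

lemma mem_schurTriangle_of_eq_zero (hx : 0 < x) (hy : 0 < y) (h_sum : x + y ≤ n)
    (h₁ : schurColoring n x = 0) (h₂ : schurColoring n y = 0)
    (h₃ : schurColoring n (x + y) = 0) :
    (x, y) ∈ schurTriangle n 0 ∨ (x, y) ∈ schurTriangle n 1 ∨ (x, y) ∈ schurTriangle n 2 ∨
      (x, y) ∈ schurTriangle n 3 ∨ (x, y) ∈ schurTriangle n 4 ∨ (x, y) ∈ schurTriangle n 5 ∨
      (x, y) ∈ schurTriangle n 6 := by
  have := schurColoring_eq_zero_iff.1 h₁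
  have := schurColoring_eq_zero_iff.1 h₂
  have := schurColoring_eq_zero_iff.1 h₃
  simp only [schurTriangle, Matrix.cons_val, mem_triangle]
  omega

lemma mem_schurTriangle_of_eq_one (h₁ : schurColoring n x = 1) (h₂ : schurColoring n y = 1)
    (h₃ : schurColoring n (x + y) = 1) :
    (x, y) ∈ schurTriangle n 7 ∨ (x, y) ∈ schurTriangle n 8 ∨ (x, y) ∈ schurTriangle n 9 := by
  have := schurColoring_eq_one_iff.1 h₁
  have := schurColoring_eq_one_iff.1 h₂
  have := schurColoring_eq_one_iff.1 h₃
  simp only [schurTriangle, Matrix.cons_val, mem_triangle]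
  omega

lemma mem_schurTriangle_of_eq_two (h₁ : schurColoring n x = 2) (h₂ : schurColoring n y = 2)
    (h₃ : schurColoring n (x + y) = 2) :
    (x, y) ∈ schurTriangle n 10 := by
  have := schurColoring_eq_two_iff.1 h₁
  have := schurColoring_eq_two_iff.1 h₂
  have := schurColoring_eq_two_iff.1 h₃
  simp only [schurTriangle, Matrix.cons_val, mem_triangle]
  omega

end SchurColoring

lemma orderedSchurPairs_schurColoring_subset (n : ℕ) :
    orderedSchurPairs n (schurColoring n) ⊆ univ.biUnion (schurTriangle n) := by
  rintro ⟨x, y⟩ hp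
  simp only [orderedSchurPairs, mem_filter, mem_product, mem_Icc] at hp
  obtain ⟨⟨⟨hx, -⟩, hy, -⟩, h_sum, h₁, h₂⟩ := hp
  simp only [mem_biUnion, mem_univ, true_and]
  obtain h | h | h : schurColoring n (x + y) = 0 ∨ schurColoring n (x + y) = 1 ∨
      schurColoring n (x + y) = 2 := by omega
  · rcases mem_schurTriangle_of_eq_zero hx hy h_sum (h₁.trans (h₂.trans h)) (h₂.trans h) h with
      h | h | h | h | h | h | h
    exacts [⟨0, h⟩, ⟨1, h⟩, ⟨2, h⟩, ⟨3, h⟩, ⟨4, h⟩, ⟨5, h⟩, ⟨6, h⟩]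
  · rcases mem_schurTriangle_of_eq_one (h₁.trans (h₂.trans h)) (h₂.trans h) h with h | h | h
    exacts [⟨7, h⟩, ⟨8, h⟩, ⟨9, h⟩]
  · exact ⟨10, mem_schurTriangle_of_eq_two (h₁.trans (h₂.trans h)) (h₂.trans h) h⟩

lemma sq_mul_two_mul_card_schurTriangle_le (n : ℕ) (i : Fin 11) :
    3119 ^ 2 * (2 * #(schurTriangle n i)) ≤ (schurTriangleWidth i * n + 2 * 3119) ^ 2 := by
  fin_cases i <;>
    simp only [schurTriangle, schurTriangleWidth, Fin.reduceFinMk, Matrix.cons_val] <;>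
    exact sq_mul_two_mul_card_triangle_le (by omega)

lemma sum_sq_schurTriangleWidth (n : ℕ) :
    ∑ i, (schurTriangleWidth i * n + 2 * 3119) ^ 2 =
      293186 * n ^ 2 + 16069088 * n + 428039084 := by
  simp only [schurTriangleWidth, Fin.sum_univ_succ, Matrix.cons_val_zero, Matrix.cons_val_succ,
    univ_unique, Fin.default_eq_zero, Matrix.cons_val_fin_one, sum_const, card_singleton,
    smul_eq_mul]
  ring

lemma schurTriples_schurColoring_le (n : ℕ) :
    4 * 3119 ^ 2 * schurTriples n (schurColoring n) ≤
      293186 * n ^ 2 + 35525410 * n + 428039084 := by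
  have h_double := two_mul_schurTriples_le n (schurColoring n)
  have h_cover := (card_le_card (orderedSchurPairs_schurColoring_subset n)).trans
    (card_biUnion_le (s := univ) (t := schurTriangle n))
  have h_tri : 3119 ^ 2 * (2 * ∑ i, #(schurTriangle n i)) ≤
      ∑ i, (schurTriangleWidth i * n + 2 * 3119) ^ 2 := by
    rw [mul_sum, mul_sum]
    exact sum_le_sum fun i _ => sq_mul_two_mul_card_schurTriangle_le n i
  rw [sum_sq_schurTriangleWidth] at h_tri
  omega

/-- The 3-coloring of `[1,n]` into seven consecutive intervals with lengths
proportional to `1, 3/2, 1/4, 3, 1/8, 487/440, 47/440` and colors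
`1, 2, 1, 3, 1, 2, 1` has at most `47n²/6238 + C·n` monochromatic Schur
triples. -/
theorem schur_three_colorings :
    ∃ C : ℝ, 0 < C ∧ ∀ n : ℕ, 0 < n →
      (schurTriples n (fun x =>
          if x ≤ 440 * n / 3119 then (0 : Fin 3)
          else if x ≤ 1100 * n / 3119 then 1
          else if x ≤ 1210 * n / 3119 then 0
          else if x ≤ 2530 * n / 3119 then 2
          else if x ≤ 2585 * n / 3119 then 0
          else if x ≤ 3072 * n / 3119 then 1
          else 0) : ℝ) ≤ 47 * (n : ℝ) ^ 2 / 6238 + C * n := by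
  refine ⟨12, by norm_num, fun n hn => ?_⟩
  have h : (4 * 3119 ^ 2 * schurTriples n (schurColoring n) : ℝ) ≤
      293186 * n ^ 2 + 35525410 * n + 428039084 := by
    exact_mod_cast schurTriples_schurColoring_le n
  have hn : (1 : ℝ) ≤ n := by exact_mod_cast hn
  change (schurTriples n (schurColoring n) : ℝ) ≤ _
  linarith
end
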